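/- arXiv:1010.4755 — 5 statements merged into one kernel-verified Lean document; each statement's English description precedes it below -/
import Mathlib

section
/- Under the geometric setup, the set 𝒰 = ∪_{j=1}^4 conv^{Λ_W}{B_δ(A₀), T_j(B_δ(A₀))} ∖ 𝒦 is an open subset of ℝ^{2n+1}. -/
open MeasureTheory Real Filter Topology

noncomputable section

/-- Euclidean space `ℝⁿ`. -/
abbrev E (n : ℕ) := EuclideanSpace ℝ (Fin n)

/-- Build a vector of `ℝⁿ` from coordinates. -/
def toE {n : ℕ} (f : Fin n → ℝ) : E n := WithLp.toLp 2 f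

/-- The fundamental cube `[0,2π)ⁿ` of the torus `𝕋ⁿ = ℝⁿ/(2πℤ)ⁿ`. -/
def cube (n : ℕ) : Set (E n) := {x | ∀ i, x i ∈ Set.Ico (0:ℝ) (2*π)}

/-- The lattice vector `2πk`, `k ∈ ℤⁿ`. -/
def lat {n : ℕ} (k : Fin n → ℤ) : E n := toE fun i => 2*π*(k i)

/-- An integer frequency `k ∈ ℤⁿ` viewed as a vector of `ℝⁿ`. -/
def intVec {n : ℕ} (k : Fin n → ℤ) : E n := toE fun i => (k i : ℝ)

/-- A function on `ℝⁿ` which is `2πℤⁿ`-periodic, i.e. a function on the torus. -/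
def SpacePeriodic {n : ℕ} {α : Type*} (f : E n → α) : Prop :=
  ∀ (x : E n) (k : Fin n → ℤ), f (x + lat k) = f x

/-- The `k`-th Fourier coefficient of a function on the torus `𝕋ⁿ`. -/
def fcoeff {n : ℕ} (f : E n → ℝ) (k : Fin n → ℤ) : ℂ :=
  ((2*π)^n : ℝ)⁻¹ • ∫ x in cube n,
    Complex.exp (-Complex.I * (∑ i, (k i : ℂ) * (x i : ℂ))) * (f x)

/-- `ξ ∈ S^{n-1}` is a regular point of the symbol `m` if `m` is `C¹` near `ξ` and the
restriction of `m` to the sphere is an immersion near `ξ` (its differential is injective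
on the tangent space of the sphere). -/
def RegularPt {n : ℕ} (m : E n → E n) (ξ : E n) : Prop :=
  ξ ∈ Metric.sphere (0 : E n) 1 ∧
  ∃ U : Set (E n), IsOpen U ∧ ξ ∈ U ∧ ContDiffOn ℝ 1 m U ∧
    ∀ η ∈ U ∩ Metric.sphere (0 : E n) 1, ∀ v : E n,
      inner ℝ η v = (0:ℝ) → fderiv ℝ m η v = 0 → v = 0

/-- `u = T[θ]` for the Fourier multiplier `T` with symbol `m`:
`û(k) = m(k) θ̂(k)` for all `k ∈ ℤⁿ ∖ {0}`. -/
def IsMultiplier {n : ℕ} (m : E n → E n) (θ : E n → ℝ) (u : E n → E n) : Prop :=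
  ∀ k : Fin n → ℤ, k ≠ 0 → ∀ i : Fin n,
    fcoeff (fun x => u x i) k = (m (intVec k) i : ℂ) * fcoeff θ k

/-- `div u = 0` on the torus, in the sense of distributions. -/
def DivFree {n : ℕ} (u : E n → E n) : Prop :=
  ∀ ψ : E n → ℝ, ContDiff ℝ (⊤:ℕ∞) ψ → SpacePeriodic ψ →
    ∫ x in cube n, fderiv ℝ ψ x (u x) = 0

/-- A test function on `ℝ × 𝕋ⁿ`: smooth, `2πℤⁿ`-periodic in space,
compactly supported in time. -/
def IsTest {n : ℕ} (φ : ℝ × E n → ℝ) : Prop :=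
  ContDiff ℝ (⊤:ℕ∞) φ ∧ (∀ (t : ℝ) (x : E n) (k : Fin n → ℤ), φ (t, x + lat k) = φ (t, x)) ∧
  ∃ R : ℝ, ∀ (t : ℝ) (x : E n), R ≤ |t| → φ (t, x) = 0

/-- The weak form of the transport equation `∂ₜθ + u·∇θ = 0` on `ℝ × 𝕋ⁿ`:
`∫∫ θ (∂ₜφ + u·∇φ) = 0` for all test functions `φ`. -/
def WeakTransport {n : ℕ} (θ : ℝ → E n → ℝ) (u : ℝ → E n → E n) : Prop :=
  ∀ φ : ℝ × E n → ℝ, IsTest φ →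
    (∫ t : ℝ, ∫ x in cube n,
      θ t x * (fderiv ℝ φ (t, x) (1, 0) + fderiv ℝ φ (t, x) (0, u t x))) = 0

/-- Weak solution of the active scalar system `∂ₜθ + u·∇θ = 0`, `div u = 0`, `u = T[θ]`,
with zero spatial means. -/
def IsWeakSolution {n : ℕ} (m : E n → E n) (θ : ℝ → E n → ℝ) (u : ℝ → E n → E n) : Prop :=
  (∀ t, SpacePeriodic (θ t)) ∧ (∀ t, SpacePeriodic (u t)) ∧
  AEStronglyMeasurable (fun p : ℝ × E n => θ p.1 p.2) volume ∧
  AEStronglyMeasurable (fun p : ℝ × E n => u p.1 p.2) volume ∧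
  WeakTransport θ u ∧
  (∀ᵐ t : ℝ, DivFree (u t)) ∧
  (∀ᵐ t : ℝ, IsMultiplier m (θ t) (u t)) ∧
  (∀ t : ℝ, (∫ x in cube n, θ t x) = 0 ∧ (∫ x in cube n, u t x) = (0 : E n))

/-- The constraint set `K = {(θ, θu, u) : θ ∈ ℝ, u ∈ ℝⁿ}`. -/
def Kset (n : ℕ) : Set (ℝ × E n × E n) := {p | p.2.1 = p.1 • p.2.2}

/-- The restricted wave cone `Λ_W = {(θ, q, θ m(ξ)) : θ ≠ 0, ξ ∈ W, q ∈ ℝⁿ}`. -/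
def LamW {n : ℕ} (m : E n → E n) (W : Set (E n)) : Set (ℝ × E n × E n) :=
  {p | p.1 ≠ 0 ∧ ∃ ξ ∈ W, p.2.2 = p.1 • m ξ}

/-- `W` is a relatively open subset of the sphere `S^{n-1}` on which `m` restricted to
the sphere is a `C¹` immersion. -/
def ImmersionOn {n : ℕ} (m : E n → E n) (W : Set (E n)) : Prop :=
  ∃ U : Set (E n), IsOpen U ∧ W = U ∩ Metric.sphere (0:E n) 1 ∧ ContDiffOn ℝ 1 m U ∧
    ∀ η ∈ W, ∀ v : E n, inner ℝ η v = (0:ℝ) → fderiv ℝ m η v = 0 → v = 0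

/-- The `Λ`-convex hull of a pair of sets:
`conv^Λ{E₁,E₂} = {λA₁ + (1-λ)A₂ : λ ∈ [0,1], Aᵢ ∈ Eᵢ, A₁ - A₂ ∈ Λ}`. -/
def convLam {n : ℕ} (Λ E₁ E₂ : Set (ℝ × E n × E n)) : Set (ℝ × E n × E n) :=
  {a | ∃ l ∈ Set.Icc (0:ℝ) 1, ∃ A₁ ∈ E₁, ∃ A₂ ∈ E₂,
    A₁ - A₂ ∈ Λ ∧ a = l • A₁ + (1 - l) • A₂}

/-- The ball `B_δ(A₀)` around the state `A₀ = (0, q₀, 0)`. -/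
def stateBall {n : ℕ} (q₀ : E n) (δ : ℝ) : Set (ℝ × E n × E n) :=
  Metric.ball ((0:ℝ), q₀, (0:E n)) δ

/-- The four points `T₁ = (1,x₁,x₁)`, `T₂ = (1,x₂,x₂)`, `T₃ = (-1,-y₁,y₁)`,
`T₄ = (-1,-y₂,y₂)` of the constraint set `K`. -/
def T4pt {n : ℕ} (x₁ x₂ y₁ y₂ : E n) : Fin 4 → ℝ × E n × E n :=
  ![((1:ℝ), x₁, x₁), ((1:ℝ), x₂, x₂), ((-1:ℝ), -y₁, y₁), ((-1:ℝ), -y₂, y₂)]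

/-- The four maps `A ↦ T_j(A)` built from `x₁, x₂, y₁, y₂ : B_δ(A₀) → ℝⁿ`. -/
def T4fun {n : ℕ} (x₁ x₂ y₁ y₂ : ℝ × E n × E n → E n) (j : Fin 4)
    (A : ℝ × E n × E n) : ℝ × E n × E n :=
  T4pt (x₁ A) (x₂ A) (y₁ A) (y₂ A) j

/-- The conclusion of the `T4`-configuration lemma (Lemma 3.1): every
`A ∈ B_δ(A₀)` is a convex combination, with coefficients `l A j ∈ (0,1)`, of the four
points `T_j(A) ∈ K`, with `T_j(A) - A ∈ Λ_W`, and the maps `x₁, x₂, y₁, y₂` are open. -/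
def T4Setup {n : ℕ} (m : E n → E n) (W : Set (E n)) (q₀ : E n) (δ : ℝ)
    (x₁ x₂ y₁ y₂ : ℝ × E n × E n → E n) (l : ℝ × E n × E n → Fin 4 → ℝ) : Prop :=
  (∀ A ∈ stateBall q₀ δ,
    (∀ j, l A j ∈ Set.Ioo (0:ℝ) 1) ∧ (∑ j, l A j) = 1 ∧
    A = ∑ j, l A j • T4fun x₁ x₂ y₁ y₂ j A ∧
    ∀ j, T4fun x₁ x₂ y₁ y₂ j A ∈ Kset n ∧ T4fun x₁ x₂ y₁ y₂ j A - A ∈ LamW m W) ∧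
  (∀ O : Set (ℝ × E n × E n), O ⊆ stateBall q₀ δ → IsOpen O →
    IsOpen (x₁ '' O) ∧ IsOpen (x₂ '' O) ∧ IsOpen (y₁ '' O) ∧ IsOpen (y₂ '' O))

/-- The target set `𝒦 = ∪_j T_j(B_δ(A₀)) ⊂ K`. -/
def Kcal {n : ℕ} (q₀ : E n) (δ : ℝ) (x₁ x₂ y₁ y₂ : ℝ × E n × E n → E n) :
    Set (ℝ × E n × E n) :=
  ⋃ j : Fin 4, T4fun x₁ x₂ y₁ y₂ j '' stateBall q₀ δ

/-- The relaxed set `𝒰 = ∪_j conv^{Λ_W}{B_δ(A₀), T_j(B_δ(A₀))} ∖ 𝒦`. -/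
def Ucal {n : ℕ} (m : E n → E n) (W : Set (E n)) (q₀ : E n) (δ : ℝ)
    (x₁ x₂ y₁ y₂ : ℝ × E n × E n → E n) : Set (ℝ × E n × E n) :=
  (⋃ j : Fin 4, convLam (LamW m W) (stateBall q₀ δ)
      (T4fun x₁ x₂ y₁ y₂ j '' stateBall q₀ δ)) \ Kcal q₀ δ x₁ x₂ y₁ y₂


/-!
A point `a` of `𝒰` is `l A₁ + (1 - l) T` with `A₁ ∈ B_δ(A₀)`, `T = (ε, ε h, h) = T_j(A)` and
`A₁ - T = (θ - ε, q - ε h, (θ - ε) m(ξ))`; here `l ≠ 0`, since otherwise `a = T ∈ 𝒦`.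
Freezing `l`, `ε` and `ξ`, the point `a` depends on `(θ, q, h)` through an affine bijection, so
moving `(θ, q, h)` in the open set `{(θ, q, h) : A₁ ∈ B_δ(A₀), h ∈ g(B_δ(A₀))}` (where `g` is
the open map giving `T_j`) sweeps out a neighbourhood of `a`. None of these points lies in `𝒦`:
the `θ`-coordinate of every point of `𝒦` is `±1`, whereas a convex combination of
`|θ| < 1` and `ε` with `l > 0` has modulus `< 1`.
-/

section WaveChart

variable {V : Type*} [NormedAddCommGroup V] [NormedSpace ℝ V]

def kPoint (ε : ℝ) (h : V) : ℝ × V × V := (ε, ε • h, h)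

def waveEnd (ε : ℝ) (μ : V) (p : ℝ × V × V) : ℝ × V × V := (p.1, p.2.1, p.2.2 + (p.1 - ε) • μ)

/-- `p = (θ, q, h)` encodes the pair `A₁ = waveEnd ε μ p`, `T = kPoint ε h`, whose difference
lies in the wave direction `μ`; `waveMix l ε μ p` is the point `l A₁ + (1 - l) T`. -/
def waveMix (l ε : ℝ) (μ : V) (p : ℝ × V × V) : ℝ × V × V :=
  l • waveEnd ε μ p + (1 - l) • kPoint ε p.2.2

variable {ε : ℝ} {μ : V}

lemma continuous_waveEnd : Continuous (waveEnd ε μ) := by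
  unfold waveEnd; fun_prop

lemma waveEnd_sub_kPoint (p : ℝ × V × V) :
    waveEnd ε μ p - kPoint ε p.2.2 = (p.1 - ε, p.2.1 - ε • p.2.2, (p.1 - ε) • μ) := by
  simp [waveEnd, kPoint]

lemma fst_waveMix (l : ℝ) (p : ℝ × V × V) : (waveMix l ε μ p).1 = l * p.1 + (1 - l) * ε := rfl

lemma isOpenMap_waveMix {l : ℝ} (hl : l ≠ 0) : IsOpenMap (waveMix l ε μ) := by
  -- `b = waveMix l ε μ (θ, q, h)` has `b.1 - ε = l (θ - ε)` and `b.2.2 = h + (b.1 - ε) • μ`.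
  set h : ℝ × V × V → V := fun b => b.2.2 - (b.1 - ε) • μ
  refine IsOpenMap.of_inverse
    (f' := fun b => (ε + (b.1 - ε) / l, l⁻¹ • (b.2.1 - (1 - l) • ε • h b), h b))
    (by fun_prop) (fun b => ?_) (fun p => ?_)
  all_goals
    ext <;> simp only [waveMix, waveEnd, kPoint, h, Prod.smul_mk, Prod.mk_add_mk, smul_eq_mul]
    · field_simp
      ring
    all_goals match_scalars <;> field_simp <;> ring

end WaveChart

lemma abs_mul_add_one_sub_mul_lt_one {l θ ε : ℝ} (hl : l ∈ Set.Ioc 0 1) (hθ : |θ| < 1)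
    (hε : |ε| ≤ 1) : |l * θ + (1 - l) * ε| < 1 := by
  obtain ⟨hl0, hl1⟩ := hl
  rw [abs_lt] at hθ ⊢
  rw [abs_le] at hε
  constructor <;> nlinarith

section T4

variable {n : ℕ} {m : E n → E n} {W : Set (E n)} {q₀ : E n} {δ : ℝ}
  {x₁ x₂ y₁ y₂ : ℝ × E n × E n → E n} {l : ℝ × E n × E n → Fin 4 → ℝ}

variable (x₁ x₂ y₁ y₂) in
lemma T4fun_eq_kPoint (j : Fin 4) : ∃ ε : ℝ, |ε| = 1 ∧ ∃ g ∈ ({x₁, x₂, y₁, y₂} : Set _),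
    ∀ A, T4fun x₁ x₂ y₁ y₂ j A = kPoint ε (g A) := by
  fin_cases j
  · exact ⟨1, abs_one, x₁, by simp, fun A => by simp [T4fun, T4pt, kPoint]⟩
  · exact ⟨1, abs_one, x₂, by simp, fun A => by simp [T4fun, T4pt, kPoint]⟩
  · exact ⟨-1, by simp, y₁, by simp, fun A => by simp [T4fun, T4pt, kPoint]⟩
  · exact ⟨-1, by simp, y₂, by simp, fun A => by simp [T4fun, T4pt, kPoint]⟩

lemma abs_fst_of_mem_Kcal {b : ℝ × E n × E n} (hb : b ∈ Kcal q₀ δ x₁ x₂ y₁ y₂) : |b.1| = 1 := by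
  obtain ⟨j, A, -, rfl⟩ := Set.mem_iUnion.1 hb
  obtain ⟨ε, hε, g, -, hT⟩ := T4fun_eq_kPoint x₁ x₂ y₁ y₂ j
  rw [hT]
  exact hε

namespace T4Setup

lemma exists_kPoint (hsetup : T4Setup m W q₀ δ x₁ x₂ y₁ y₂ l) (j : Fin 4) :
    ∃ ε : ℝ, |ε| = 1 ∧ ∃ g : ℝ × E n × E n → E n,
      IsOpen (g '' stateBall q₀ δ) ∧ ∀ A, T4fun x₁ x₂ y₁ y₂ j A = kPoint ε (g A) := by
  obtain ⟨ε, hε, g, hg, hT⟩ := T4fun_eq_kPoint x₁ x₂ y₁ y₂ j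
  obtain ⟨h₁, h₂, h₃, h₄⟩ := hsetup.2 _ subset_rfl Metric.isOpen_ball
  refine ⟨ε, hε, g, ?_, hT⟩
  rcases hg with rfl | rfl | rfl | rfl <;> assumption

lemma abs_fst_lt_one (hsetup : T4Setup m W q₀ δ x₁ x₂ y₁ y₂ l) {A : ℝ × E n × E n}
    (hA : A ∈ stateBall q₀ δ) : |A.1| < 1 := by
  obtain ⟨hpos, hsum, hrep, -⟩ := hsetup.1 A hA
  have hA₁ : A.1 = l A 0 + l A 1 - l A 2 - l A 3 := by
    conv_lhs => rw [hrep]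
    simp only [T4fun, T4pt, Fin.sum_univ_four, Fin.isValue, Matrix.cons_val_zero, Prod.smul_mk,
      smul_eq_mul, mul_one, Matrix.cons_val_one, Prod.mk_add_mk, Matrix.cons_val, mul_neg, smul_neg]
    ring
  rw [Fin.sum_univ_four] at hsum
  have hl := fun j => (hpos j).1
  rw [abs_lt]
  constructor <;> linarith [hl 0, hl 1, hl 2, hl 3]

lemma waveMix_image_subset_Ucal (hsetup : T4Setup m W q₀ δ x₁ x₂ y₁ y₂ l) {j : Fin 4}
    {ε : ℝ} (hε : |ε| = 1) {g : ℝ × E n × E n → E n}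
    (hT : ∀ A, T4fun x₁ x₂ y₁ y₂ j A = kPoint ε (g A)) {t : ℝ} (ht : t ∈ Set.Ioc 0 1)
    {ξ : E n} (hξ : ξ ∈ W) :
    waveMix t ε (m ξ) '' (waveEnd ε (m ξ) ⁻¹' stateBall q₀ δ ∩
      (fun p => p.2.2) ⁻¹' (g '' stateBall q₀ δ)) ⊆ Ucal m W q₀ δ x₁ x₂ y₁ y₂ := by
  rintro _ ⟨p, ⟨hpB, A, hA, hgA⟩, rfl⟩
  have hθ : |p.1| < 1 := hsetup.abs_fst_lt_one (A := waveEnd ε (m ξ) p) hpB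
  refine ⟨Set.mem_iUnion.2 ⟨j, t, Set.Ioc_subset_Icc_self ht, _, hpB, _, ⟨A, hA, rfl⟩, ?_, ?_⟩,
    fun hK => ?_⟩
  · rw [hT, hgA, waveEnd_sub_kPoint]
    exact ⟨sub_ne_zero.2 fun h => by simp [h, hε] at hθ, ξ, hξ, rfl⟩
  · rw [hT, hgA]
    rfl
  · have := abs_mul_add_one_sub_mul_lt_one ht hθ hε.le
    rw [← fst_waveMix (μ := m ξ) t p, abs_fst_of_mem_Kcal hK] at this
    exact this.false

end T4Setup

end T4

theorem Ucal_isOpen_general (n : ℕ) (m : E n → E n)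
    (W₁ W₂ : Set (E n)) (q₀ : E n) (δ : ℝ)
    (x₁ x₂ y₁ y₂ : ℝ × E n × E n → E n) (l : ℝ × E n × E n → Fin 4 → ℝ)
    (hsetup : T4Setup m (W₁ ∪ W₂) q₀ δ x₁ x₂ y₁ y₂ l) :
    IsOpen (Ucal m (W₁ ∪ W₂) q₀ δ x₁ x₂ y₁ y₂) := by
  refine isOpen_iff_forall_mem_open.2 fun a ha => ?_
  obtain ⟨j, t, ht, A₁, hA₁, _, ⟨A, hA, rfl⟩, hΛ, rfl⟩ := Set.mem_iUnion.1 ha.1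
  obtain ⟨ε, hε, g, hg, hT⟩ := hsetup.exists_kPoint j
  have ht₀ : t ≠ 0 := by
    rintro rfl
    exact ha.2 (Set.mem_iUnion.2 ⟨j, A, hA, by simp⟩)
  rw [hT] at hΛ ⊢
  obtain ⟨-, ξ, hξ, hu⟩ := hΛ
  have hwave : waveEnd ε (m ξ) (A₁.1, A₁.2.1, g A) = A₁ := by
    simp only [kPoint, Prod.fst_sub, Prod.snd_sub] at hu
    simp only [waveEnd, ← hu, add_sub_cancel]
  refine ⟨_, hsetup.waveMix_image_subset_Ucal hε hT ⟨ht.1.lt_of_ne' ht₀, ht.2⟩ hξ,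
    isOpenMap_waveMix ht₀ _ ((Metric.isOpen_ball.preimage continuous_waveEnd).inter
      (hg.preimage continuous_snd.snd)),
    (A₁.1, A₁.2.1, g A), ⟨hwave ▸ hA₁, A, hA, rfl⟩, ?_⟩
  rw [waveMix, hwave]

/-- Lemma 3.2. Under the geometric setup (the conclusion of the
`T4`-configuration lemma), the set
`𝒰 = ∪_{j=1}^4 conv^{Λ_W}{B_δ(A₀), T_j(B_δ(A₀))} ∖ 𝒦` is open in `ℝ^{2n+1}`. -/
theorem Ucal_isOpen (n : ℕ) (hn : 2 ≤ n) (m : E n → E n)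
    (heven : ∀ ξ : E n, ξ ≠ 0 → m (-ξ) = m ξ)
    (hhom : ∀ (r : ℝ), 0 < r → ∀ ξ : E n, ξ ≠ 0 → m (r • ξ) = m ξ)
    (ξ₁ ξ₂ : E n) (W₁ W₂ : Set (E n)) (q₀ : E n) (δ : ℝ) (hδ : 0 < δ)
    (hreg₁ : RegularPt m ξ₁) (hreg₂ : RegularPt m ξ₂)
    (hξ₁ : ξ₁ ∈ W₁) (hξ₂ : ξ₂ ∈ W₂)
    (hW₁ : ImmersionOn m W₁) (hW₂ : ImmersionOn m W₂)
    (x₁ x₂ y₁ y₂ : ℝ × E n × E n → E n) (l : ℝ × E n × E n → Fin 4 → ℝ)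
    (hsetup : T4Setup m (W₁ ∪ W₂) q₀ δ x₁ x₂ y₁ y₂ l) :
    IsOpen (Ucal m (W₁ ∪ W₂) q₀ δ x₁ x₂ y₁ y₂) :=
  Ucal_isOpen_general n m W₁ W₂ q₀ δ x₁ x₂ y₁ y₂ l hsetup
end
end

section
/- Let n ≥ 2, θ₀ ∈ ℝ, and ξ = (κ₁, …, κₙ) ∈ ℝⁿ. Let M be the n×n matrix whose first column is (−θ₀κ₁, −θ₀κ₂, …, −θ₀κₙ)ᵀ and whose j-th column, for 2 ≤ j ≤ n, is −κ_j e₁ + κ₁ e_j (i.e. first entry −κ_j, j-th entry κ₁, all other entries 0). Then det M = −θ₀ κ₁^{n−2} |ξ|². In particular, det M ≠ 0 whenever θ₀ ≠ 0, κ₁ ≠ 0 and ξ ≠ 0. -/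
/-!
The matrix is an arrowhead matrix `[[a, bᵀ], [c, κ₁ I]]`. Expanding its determinant along the
first row, the minor obtained by deleting column `k + 1` has a single nonzero entry `c k` in its
row `k`, and deleting that row and column leaves a diagonal matrix. Hence
`det = a κ₁ⁿ⁺¹ - κ₁ⁿ ∑ bₖ cₖ`, which for `a = -θ₀κ₁`, `bₖ = -κₖ₊₁`, `cₖ = -θ₀κₖ₊₁`
is `-θ₀ κ₁ⁿ |ξ|²`.
-/

namespace Matrix

variable {R : Type*} [CommRing R] {m : ℕ}

/-- The block matrix `[[a, bᵀ], [c, diagonal d]]`. -/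
def arrowhead (a : R) (b c d : Fin m → R) : Matrix (Fin (m + 1)) (Fin (m + 1)) R :=
  of (vecCons (vecCons a b) fun i => vecCons (c i) (diagonal d i))

section

variable (a : R) (b c d : Fin m → R)

@[simp]
lemma arrowhead_zero_zero : arrowhead a b c d 0 0 = a := rfl

@[simp]
lemma arrowhead_zero_succ (j : Fin m) : arrowhead a b c d 0 j.succ = b j := by
  simp [arrowhead]

@[simp]
lemma arrowhead_succ_zero (i : Fin m) : arrowhead a b c d i.succ 0 = c i := by
  simp [arrowhead]

@[simp]
lemma arrowhead_succ_succ (i j : Fin m) :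
    arrowhead a b c d i.succ j.succ = diagonal d i j := by
  simp [arrowhead]

lemma submatrix_succ_succ_arrowhead :
    (arrowhead a b c d).submatrix Fin.succ Fin.succ = diagonal d := by
  ext i j
  simp

lemma det_arrowhead_submatrix_succ_succAbove (k : Fin m) :
    ((arrowhead a b c d).submatrix Fin.succ k.succ.succAbove).det =
      (-1) ^ (k : ℕ) * c k * ∏ l ∈ {k}ᶜ, d l := by
  cases m with
  | zero => exact k.elim0
  | succ m =>
  rw [det_succ_row _ k, Fin.sum_univ_succ, Fintype.sum_eq_zero _ fun l => ?off_diagonal, add_zero]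
  case off_diagonal => simp
  have hdiag : ((arrowhead a b c d).submatrix Fin.succ k.succ.succAbove).submatrix k.succAbove
      (Fin.succAbove 0) = diagonal (d ∘ k.succAbove) := by
    ext i j
    simp [diagonal_apply]
  rw [hdiag, det_diagonal, ← Fin.image_succAbove_univ,
    Finset.prod_image Fin.succAbove_right_injective.injOn]
  simp

theorem det_arrowhead :
    (arrowhead a b c d).det = a * ∏ i, d i - ∑ k, b k * c k * ∏ l ∈ {k}ᶜ, d l := by
  rw [det_succ_row_zero, Fin.sum_univ_succ, sub_eq_add_neg, ← Finset.sum_neg_distrib]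
  simp only [det_arrowhead_submatrix_succ_succAbove, arrowhead_zero_zero, arrowhead_zero_succ,
    Fin.val_zero, Fin.val_succ, Fin.succAbove_zero, submatrix_succ_succ_arrowhead, det_diagonal,
    pow_zero, one_mul]
  refine congrArg _ (Finset.sum_congr rfl fun k _ => ?_)
  have hsign : ((-1 : R)) ^ ((k : ℕ) + 1) * (-1) ^ (k : ℕ) = -1 := by
    rw [← pow_add, (by ring : (k : ℕ) + 1 + k = 2 * k + 1), pow_succ, pow_mul]
    simp
  linear_combination (b k * c k * ∏ l ∈ {k}ᶜ, d l) * hsign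

end

theorem det_arrowhead_const (a d : R) (b c : Fin (m + 1) → R) :
    (arrowhead a b c fun _ => d).det = d ^ m * (a * d - ∑ k, b k * c k) := by
  simp only [det_arrowhead, Finset.prod_const, Finset.card_univ, Fintype.card_fin,
    Finset.card_compl, Finset.card_singleton, add_tsub_cancel_right]
  rw [mul_sub, Finset.mul_sum, pow_succ]
  ring_nf

end Matrix

/-- For dimension `n + 2 ≥ 2`: the determinant of the matrix whose first
column is `(-θ₀κ₁, …, -θ₀κₙ)ᵀ` and whose `j`-th column (`j ≥ 2`) is `-κ_j e₁ + κ₁ e_j`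
equals `-θ₀ κ₁^{(n+2)-2} |ξ|²`; in particular it is nonzero when `θ₀ ≠ 0`, `κ₁ ≠ 0` and
`ξ ≠ 0`. -/
theorem det_oscillation_matrix (n : ℕ) (θ₀ : ℝ) (κ : Fin (n + 2) → ℝ)
    (M : Matrix (Fin (n + 2)) (Fin (n + 2)) ℝ)
    (hM : M = Matrix.of fun i j : Fin (n + 2) =>
      if j = 0 then -θ₀ * κ i
      else if i = 0 then -(κ j)
      else if i = j then κ 0
      else 0) :
    M.det = -θ₀ * (κ 0) ^ n * (∑ i, (κ i) ^ 2) ∧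
    (θ₀ ≠ 0 → κ 0 ≠ 0 → κ ≠ 0 → M.det ≠ 0) := by
  have hM_arrowhead : M = Matrix.arrowhead (-θ₀ * κ 0) (fun j => -κ j.succ)
      (fun i => -θ₀ * κ i.succ) (fun _ => κ 0) := by
    subst hM
    ext i j
    cases i using Fin.cases <;> cases j using Fin.cases <;> simp [Matrix.diagonal_apply]
  have hdet : M.det = -θ₀ * (κ 0) ^ n * (∑ i, (κ i) ^ 2) := by
    have hcross : ∑ k : Fin (n + 1), -κ k.succ * (-θ₀ * κ k.succ) =
        θ₀ * ∑ k : Fin (n + 1), κ k.succ ^ 2 := by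
      rw [Finset.mul_sum]
      exact Finset.sum_congr rfl fun k _ => by ring
    rw [hM_arrowhead, Matrix.det_arrowhead_const, Fin.sum_univ_succ (fun i => κ i ^ 2), hcross]
    ring
  refine ⟨hdet, fun hθ₀ hκ₀ hκ => ?_⟩
  have hnormsq : ∑ i, κ i ^ 2 ≠ 0 := by
    contrapose! hκ
    funext i
    exact pow_eq_zero_iff two_ne_zero |>.mp <|
      congrFun ((Fintype.sum_eq_zero_iff_of_nonneg fun i => sq_nonneg (κ i)).mp hκ) i
  rw [hdet]
  exact mul_ne_zero (mul_ne_zero (neg_ne_zero.mpr hθ₀) (pow_ne_zero _ hκ₀)) hnormsq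
end

section
/- Define m : ℝ²∖{0} → ℝ² by m(ξ) = |ξ|^{−2}(ξ₁ξ₂, −ξ₁²) (the symbol of the 2D porous media / Darcy multiplier). Then: (1) m is even and 0-homogeneous; (2) m(ξ)·ξ = 0 for all ξ ≠ 0; (3) the restriction of m to the unit circle S¹ is a C¹ immersion at every point, so every ξ ∈ S¹ is a regular point; (4) the image m(S¹) equals the circle {z ∈ ℝ² : |z + (0, 1/2)| = 1/2}; in particular m(S¹) spans ℝ². -/
noncomputable section

/-! Write `m = |ξ|⁻² q(ξ)` with `q(ξ) = (ξ₁ξ₂, −ξ₁²)` (`ipmNumerator`). Since `q` is quadratic,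
`m` is invariant under every nonzero dilation, and `q(ξ)·ξ = 0` is a polynomial identity. On the
unit circle the differential of `|ξ|⁻²` vanishes on tangent vectors, so the tangential derivative
of `m` is that of `q`, which is injective there by direct computation. Also `m = q` on the circle,
and `q(cos θ, sin θ) = (0, −1/2) + ½(sin 2θ, −cos 2θ)`: it covers the circle of radius `1/2`
around `(0, −1/2)` (for `z` on it solve `ξ₁² = −z₂`, `ξ₁ξ₂ = z₁`), and a sphere of positive radius
spans the whole space. -/

open Metric InnerProductSpace

namespace PorousMedia

section DivNormSq

variable {V F : Type*} [NormedAddCommGroup V] [NormedAddCommGroup F] [NormedSpace ℝ F]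

def divNormSq (q : V → F) (x : V) : F := (‖x‖ ^ 2)⁻¹ • q x

theorem divNormSq_smul [NormedSpace ℝ V] {q : V → F}
    (hq : ∀ (r : ℝ) x, q (r • x) = r ^ 2 • q x) {r : ℝ} (hr : r ≠ 0) (x : V) :
    divNormSq q (r • x) = divNormSq q x := by
  rw [divNormSq, divNormSq, hq, norm_smul, mul_pow, Real.norm_eq_abs, sq_abs, smul_smul]
  congr 1
  field_simp

theorem divNormSq_image_unit_sphere (q : V → F) :
    divNormSq q '' sphere 0 1 = q '' sphere 0 1 :=
  Set.image_congr fun x hx => by simp [divNormSq, mem_sphere_zero_iff_norm.1 hx]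

theorem contDiffOn_divNormSq [InnerProductSpace ℝ V] {q : V → F} {n : WithTop ℕ∞}
    (hq : ContDiff ℝ n q) :
    ContDiffOn ℝ n (divNormSq q) {x | x ≠ 0} :=
  ((contDiff_norm_sq ℝ).contDiffOn.inv fun _ hx => pow_ne_zero 2 (norm_ne_zero_iff.2 hx)).smul
    hq.contDiffOn

theorem fderiv_divNormSq_apply_of_inner_eq_zero [InnerProductSpace ℝ V] {q : V → F} {x v : V}
    (hq : DifferentiableAt ℝ q x) (hx : ‖x‖ = 1) (hv : ⟪x, v⟫_ℝ = 0) :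
    fderiv ℝ (divNormSq q) x v = fderiv ℝ q x v := by
  have hinv : HasFDerivAt (fun y : V => (‖y‖ ^ 2)⁻¹) _ x :=
    (hasDerivAt_inv (by simp [hx])).comp_hasFDerivAt x (hasStrictFDerivAt_norm_sq x).hasFDerivAt
  unfold divNormSq
  rw [(hinv.fun_smul hq.hasFDerivAt).fderiv]
  simp [hx, hv]

end DivNormSq

theorem span_sphere_eq_top {V : Type*} [NormedAddCommGroup V] [NormedSpace ℝ V] (c : V) {r : ℝ}
    (hr : 0 < r) : Submodule.span ℝ (sphere c r) = ⊤ := by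
  refine Submodule.eq_top_iff'.2 fun x => ?_
  rcases eq_or_ne x 0 with rfl | hx
  · exact Submodule.zero_mem _
  have hx' : ‖x‖ ≠ 0 := norm_ne_zero_iff.2 hx
  set u := (r / ‖x‖) • x
  have hu : ‖u‖ = r := by simp [u, norm_smul, abs_of_pos hr, hx']
  have hplus : c + u ∈ sphere c r := by simp [hu]
  have hminus : c - u ∈ sphere c r := by simp [hu]
  have : x = (‖x‖ / (2 * r)) • ((c + u) - (c - u)) := by
    simp only [add_sub_sub_cancel, ← two_smul ℝ u, smul_smul, u]
    field_simp
    simp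
  rw [this]
  exact Submodule.smul_mem _ _ (Submodule.sub_mem _ (Submodule.subset_span hplus)
    (Submodule.subset_span hminus))

theorem fderiv_euclideanSpace_apply {H ι : Type*} [NormedAddCommGroup H] [NormedSpace ℝ H]
    [Fintype ι] {f : H → EuclideanSpace ℝ ι} {y : H} (hf : DifferentiableAt ℝ f y) (v : H)
    (i : ι) : fderiv ℝ f y v i = fderiv ℝ (fun x => f x i) y v := by
  have h : HasFDerivAt (fun x => f x i) ((PiLp.proj 2 (fun _ => ℝ) i).comp (fderiv ℝ f y)) y :=
    (PiLp.hasFDerivAt_apply (𝕜 := ℝ) 2 (f y) i).comp y hf.hasFDerivAt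
  rw [h.fderiv]
  rfl

theorem regularPt_divNormSq {n : ℕ} {q : E n → E n} (hq : ContDiff ℝ 1 q)
    (hinj : ∀ η : E n, ‖η‖ = 1 → ∀ v, ⟪η, v⟫_ℝ = 0 → fderiv ℝ q η v = 0 → v = 0) {ξ : E n}
    (hξ : ξ ∈ sphere (0 : E n) 1) : RegularPt (divNormSq q) ξ := by
  refine ⟨hξ, {x | x ≠ 0}, isOpen_ne, ne_zero_of_mem_sphere one_ne_zero ⟨ξ, hξ⟩,
    contDiffOn_divNormSq hq, ?_⟩
  rintro η ⟨-, hη⟩ v hv hd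
  rw [mem_sphere_zero_iff_norm] at hη
  rw [fderiv_divNormSq_apply_of_inner_eq_zero (hq.differentiable one_ne_zero η) hη hv] at hd
  exact hinj η hη v hv hd

theorem exists_unit_of_sq_add_sq_add_eq_zero {a b : ℝ} (h : a ^ 2 + b ^ 2 + b = 0) :
    ∃ x y : ℝ, x ^ 2 + y ^ 2 = 1 ∧ x * y = a ∧ x ^ 2 = -b := by
  rcases (show b ≤ 0 by nlinarith [sq_nonneg a, sq_nonneg b]).eq_or_lt with rfl | hb
  · exact ⟨0, 1, by norm_num, by simp at h; simp [h], by norm_num⟩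
  have hx2 : √(-b) ^ 2 = -b := Real.sq_sqrt (by linarith)
  have hx : √(-b) ≠ 0 := (Real.sqrt_pos.2 (neg_pos.2 hb)).ne'
  refine ⟨√(-b), a / √(-b), ?_, by field_simp, hx2⟩
  field_simp
  linear_combination (√(-b) ^ 2 - b - 1) * hx2 + h

theorem norm_sq_fin_two (x : E 2) : ‖x‖ ^ 2 = x 0 ^ 2 + x 1 ^ 2 := by
  simp [EuclideanSpace.real_norm_sq_eq, Fin.sum_univ_two]

theorem inner_fin_two (x y : E 2) : ⟪x, y⟫_ℝ = x 0 * y 0 + x 1 * y 1 := by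
  simp [PiLp.inner_apply, Fin.sum_univ_two, mul_comm]

theorem ext_fin_two {x y : E 2} (h0 : x 0 = y 0) (h1 : x 1 = y 1) : x = y := by
  ext i
  fin_cases i
  exacts [h0, h1]

theorem mem_sphere_fin_two_iff {z c : E 2} {r : ℝ} (hr : 0 ≤ r) :
    z ∈ sphere c r ↔ (z 0 - c 0) ^ 2 + (z 1 - c 1) ^ 2 = r ^ 2 := by
  rw [mem_sphere_iff_norm, ← sq_eq_sq₀ (norm_nonneg _) hr, norm_sq_fin_two]
  rfl

theorem mem_unit_sphere_fin_two_iff {x : E 2} :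
    x ∈ sphere (0 : E 2) 1 ↔ x 0 ^ 2 + x 1 ^ 2 = 1 := by
  simpa using mem_sphere_fin_two_iff (z := x) (c := 0) zero_le_one

@[simp] theorem toE_fin_two_zero (a b : ℝ) : toE ![a, b] 0 = a := rfl

@[simp] theorem toE_fin_two_one (a b : ℝ) : toE ![a, b] 1 = b := rfl

def ipmNumerator (ξ : E 2) : E 2 := toE ![ξ 0 * ξ 1, -(ξ 0 ^ 2)]

@[simp] theorem ipmNumerator_zero (ξ : E 2) : ipmNumerator ξ 0 = ξ 0 * ξ 1 := rfl

@[simp] theorem ipmNumerator_one (ξ : E 2) : ipmNumerator ξ 1 = -(ξ 0 ^ 2) := rfl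

theorem ipmNumerator_smul (r : ℝ) (ξ : E 2) :
    ipmNumerator (r • ξ) = r ^ 2 • ipmNumerator ξ :=
  ext_fin_two (by simp only [ipmNumerator_zero, PiLp.smul_apply, smul_eq_mul]; ring)
    (by simp only [ipmNumerator_one, PiLp.smul_apply, smul_eq_mul]; ring)

theorem inner_ipmNumerator_self (ξ : E 2) : ⟪ipmNumerator ξ, ξ⟫_ℝ = 0 := by
  rw [inner_fin_two]
  simp only [ipmNumerator_zero, ipmNumerator_one]
  ring

theorem contDiff_ipmNumerator {n : WithTop ℕ∞} : ContDiff ℝ n ipmNumerator := by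
  refine contDiff_piLp' _ fun i => ?_
  have h0 : ContDiff ℝ n fun ξ : E 2 => ξ 0 := contDiff_piLp_apply 2
  have h1 : ContDiff ℝ n fun ξ : E 2 => ξ 1 := contDiff_piLp_apply 2
  fin_cases i
  exacts [h0.mul h1, (h0.pow 2).neg]

theorem fderiv_ipmNumerator_apply (η v : E 2) :
    fderiv ℝ ipmNumerator η v = toE ![η 0 * v 1 + η 1 * v 0, -(2 * η 0 * v 0)] := by
  have hd : DifferentiableAt ℝ ipmNumerator η :=
    (contDiff_ipmNumerator (n := 1)).differentiable one_ne_zero η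
  have h0 := PiLp.hasFDerivAt_apply (𝕜 := ℝ) 2 η 0
  have h1 := PiLp.hasFDerivAt_apply (𝕜 := ℝ) 2 η 1
  refine ext_fin_two ?_ ?_ <;> rw [fderiv_euclideanSpace_apply hd]
  · change fderiv ℝ (fun ξ : E 2 => ξ 0 * ξ 1) η v = _
    rw [(h0.fun_mul h1).fderiv]
    simp
  · change fderiv ℝ (fun ξ : E 2 => -(ξ 0 ^ 2)) η v = _
    rw [(h0.pow 2).fun_neg.fderiv]
    simp

theorem fderiv_ipmNumerator_eq_zero_of_inner_eq_zero {η v : E 2} (hη : ‖η‖ = 1)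
    (hv : ⟪η, v⟫_ℝ = 0) (h : fderiv ℝ ipmNumerator η v = 0) : v = 0 := by
  have hN : η 0 ^ 2 + η 1 ^ 2 = 1 := by rw [← norm_sq_fin_two, hη, one_pow]
  rw [inner_fin_two] at hv
  rw [fderiv_ipmNumerator_apply] at h
  have hA : η 0 * v 1 + η 1 * v 0 = 0 := congrArg (· 0) h
  have hB : 2 * η 0 * v 0 = 0 := neg_eq_zero.1 (congrArg (· 1) h)
  have hv1 : v 1 = 0 := by linear_combination (-v 1) * hN + η 0 * hA + η 1 * hv - η 1 * hB
  have hv0 : v 0 = 0 := by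
    linear_combination (-v 0) * hN + η 0 / 2 * hB + η 1 * hA - η 0 * η 1 * hv1
  exact ext_fin_two hv0 hv1

theorem ipmNumerator_image_sphere :
    ipmNumerator '' sphere (0 : E 2) 1 = sphere (toE ![0, -(1 / 2)]) (1 / 2) := by
  ext z
  rw [mem_sphere_fin_two_iff (by norm_num), toE_fin_two_zero, toE_fin_two_one]
  constructor
  · rintro ⟨ξ, hξ, rfl⟩
    rw [mem_unit_sphere_fin_two_iff] at hξ
    rw [ipmNumerator_zero, ipmNumerator_one]
    linear_combination ξ 0 ^ 2 * hξ
  · intro hz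
    obtain ⟨x, y, hxy, hprod, hsq⟩ :=
      exists_unit_of_sq_add_sq_add_eq_zero (a := z 0) (b := z 1) (by linear_combination hz)
    refine ⟨toE ![x, y], mem_unit_sphere_fin_two_iff.2 hxy, ext_fin_two hprod ?_⟩
    rw [ipmNumerator_one, toE_fin_two_zero, hsq, neg_neg]

end PorousMedia

open PorousMedia in
/-- The symbol `m(ξ) = |ξ|⁻²(ξ₁ξ₂, -ξ₁²)` of the 2D porous media
equation is even and `0`-homogeneous, satisfies `m(ξ)·ξ = 0`, every point of `S¹` is a
regular point, and `m(S¹)` is the circle `{z : |z + (0,1/2)| = 1/2}`, which spans `ℝ²`. -/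
theorem porous_media_2d (m : E 2 → E 2)
    (hm : ∀ ξ : E 2, m ξ = (‖ξ‖ ^ 2)⁻¹ • toE ![ξ 0 * ξ 1, -(ξ 0 ^ 2)]) :
    -- (1) even and 0-homogeneous
    (∀ ξ : E 2, ξ ≠ 0 → m (-ξ) = m ξ) ∧
    (∀ (r : ℝ), 0 < r → ∀ ξ : E 2, ξ ≠ 0 → m (r • ξ) = m ξ) ∧
    -- (2) m(ξ)·ξ = 0
    (∀ ξ : E 2, ξ ≠ 0 → inner ℝ (m ξ) ξ = (0:ℝ)) ∧
    -- (3) every point of S¹ is regular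
    (∀ ξ ∈ Metric.sphere (0:E 2) 1, RegularPt m ξ) ∧
    -- (4) the image of S¹ is the circle of radius 1/2 centered at (0,-1/2) …
    m '' Metric.sphere (0:E 2) 1 = Metric.sphere (toE ![0, -(1/2)]) (1/2) ∧
    -- … which spans ℝ²
    Submodule.span ℝ (m '' Metric.sphere (0:E 2) 1) = ⊤ := by
  obtain rfl : m = divNormSq ipmNumerator := funext hm
  have himage : divNormSq ipmNumerator '' sphere 0 1 = sphere (toE ![0, -(1 / 2)]) (1 / 2) := by
    rw [divNormSq_image_unit_sphere, ipmNumerator_image_sphere]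
  refine ⟨fun ξ _ => ?_, fun r hr ξ _ => divNormSq_smul ipmNumerator_smul hr.ne' ξ,
    fun ξ _ => ?_, fun ξ hξ => regularPt_divNormSq contDiff_ipmNumerator
      (fun η hη v => fderiv_ipmNumerator_eq_zero_of_inner_eq_zero hη) hξ,
    himage, by rw [himage]; exact span_sphere_eq_top _ (by norm_num)⟩
  · simpa using divNormSq_smul ipmNumerator_smul (neg_ne_zero.2 one_ne_zero) ξ
  · rw [divNormSq, real_inner_smul_left, inner_ipmNumerator_self, mul_zero]
end
end

section
/- Define M = (M₁, M₂, M₃) : ℝ³∖{0} → ℝ³ (the symbol of the magnetostrophic turbulence multiplier) for all ξ with ξ₃²|ξ|² + ξ₂⁴ ≠ 0 by M₁(ξ) = (ξ₂ξ₃|ξ|² + ξ₁ξ₂²ξ₃)/(ξ₃²|ξ|² + ξ₂⁴), M₂(ξ) = (−ξ₁ξ₃|ξ|² + ξ₂³ξ₃)/(ξ₃²|ξ|² + ξ₂⁴), M₃(ξ) = −ξ₂²(ξ₁² + ξ₂²)/(ξ₃²|ξ|² + ξ₂⁴). Then: (1) M is even and 0-homogeneous; (2) M(ξ)·ξ = 0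 wherever M is defined; (3) M is unbounded on the unit sphere S², i.e. sup{|M(ξ)| : ξ ∈ S², ξ₃²|ξ|² + ξ₂⁴ ≠ 0} = ∞ (for instance, for ξ = (ξ₁, 0, ξ₃) ∈ S² with ξ₃ ≠ 0 one has M(ξ) = (0, −ξ₁/ξ₃, 0)). -/
/-!
Every component of `M` is a quotient of two forms of degree four in `ξ` (counting `‖ξ‖²` as a
form of degree two), so `M (r • ξ) = M ξ` for every `r ≠ 0`; evenness is the case `r = -1`.
The identity `M(ξ)·ξ = 0` already holds between the numerators. On the section `ξ₂ = 0` the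
symbol is `(0, -ξ₁/ξ₃, 0)`, so normalising `(t, 0, 1)` to the sphere gives `|M| = |t|`.
-/

noncomputable section

def magnetostrophicSymbol (ξ : E 3) : E 3 := toE
  ![(ξ 1 * ξ 2 * ‖ξ‖ ^ 2 + ξ 0 * ξ 1 ^ 2 * ξ 2) / (ξ 2 ^ 2 * ‖ξ‖ ^ 2 + ξ 1 ^ 4),
    (-(ξ 0 * ξ 2 * ‖ξ‖ ^ 2) + ξ 1 ^ 3 * ξ 2) / (ξ 2 ^ 2 * ‖ξ‖ ^ 2 + ξ 1 ^ 4),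
    -(ξ 1 ^ 2 * (ξ 0 ^ 2 + ξ 1 ^ 2)) / (ξ 2 ^ 2 * ‖ξ‖ ^ 2 + ξ 1 ^ 4)]

@[simp]
theorem toE_apply {n : ℕ} (f : Fin n → ℝ) (i : Fin n) : toE f i = f i := rfl

theorem norm_toE_three (a b c : ℝ) : ‖toE ![a, b, c]‖ = √(a ^ 2 + b ^ 2 + c ^ 2) := by
  simp [toE, EuclideanSpace.norm_eq, Fin.sum_univ_three]

theorem div_eq_div_of_eq_mul {G : Type*} [CommGroupWithZero G] {a b a' b' k : G} (hk : k ≠ 0)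
    (ha : a = k * a') (hb : b = k * b') : a / b = a' / b' := by
  rw [ha, hb, mul_div_mul_left _ _ hk]

theorem magnetostrophicSymbol_smul {r : ℝ} (hr : r ≠ 0) (ξ : E 3) :
    magnetostrophicSymbol (r • ξ) = magnetostrophicSymbol ξ := by
  have hr4 : r ^ 4 ≠ 0 := pow_ne_zero 4 hr
  have hnorm : ‖r • ξ‖ ^ 2 = r ^ 2 * ‖ξ‖ ^ 2 := by
    rw [norm_smul, mul_pow, Real.norm_eq_abs, sq_abs]
  ext i
  fin_cases i <;>
    simp only [magnetostrophicSymbol, toE, WithLp.ofLp_toLp, PiLp.smul_apply, smul_eq_mul,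
      hnorm] <;>
    exact div_eq_div_of_eq_mul hr4 (by ring) (by ring)

theorem magnetostrophicSymbol_neg (ξ : E 3) :
    magnetostrophicSymbol (-ξ) = magnetostrophicSymbol ξ := by
  simpa using magnetostrophicSymbol_smul (neg_ne_zero.mpr one_ne_zero) ξ

theorem inner_magnetostrophicSymbol_self (ξ : E 3) :
    inner ℝ (magnetostrophicSymbol ξ) ξ = 0 := by
  simp only [magnetostrophicSymbol, toE, PiLp.inner_apply, RCLike.inner_apply, conj_trivial,
    Fin.sum_univ_three, Matrix.cons_val_zero, Matrix.cons_val_one,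
    Matrix.cons_val_two, Matrix.head_cons, Matrix.tail_cons]
  rw [mul_div_assoc', mul_div_assoc', mul_div_assoc', ← add_div, ← add_div]
  exact div_eq_zero_iff.mpr (Or.inl (by ring))

theorem magnetostrophicSymbol_toE_zero_middle (a : ℝ) {c : ℝ} (hc : c ≠ 0) :
    magnetostrophicSymbol (toE ![a, 0, c]) = toE ![0, -(a / c), 0] := by
  have hnorm : ‖toE ![a, 0, c]‖ ≠ 0 := by
    rw [norm_toE_three]; positivity
  rw [magnetostrophicSymbol]
  congr 1
  ext i
  fin_cases i
  · simp
  · simp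
    field_simp
  · simp

theorem sq_mul_norm_sq_add_pow_four_pos {ξ : E 3} (hξ : ξ 2 ≠ 0) :
    0 < ξ 2 ^ 2 * ‖ξ‖ ^ 2 + ξ 1 ^ 4 := by
  have : ξ ≠ 0 := fun h ↦ hξ (by simp [h])
  positivity

theorem exists_mem_sphere_lt_norm_magnetostrophicSymbol (C : ℝ) :
    ∃ ξ ∈ Metric.sphere (0 : E 3) 1,
      ξ 2 ^ 2 * ‖ξ‖ ^ 2 + ξ 1 ^ 4 ≠ 0 ∧ C < ‖magnetostrophicSymbol ξ‖ := by
  set v := toE ![C + 1, 0, 1]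
  have hv : v ≠ 0 := fun h ↦ one_ne_zero (congrArg (· 2) h)
  have hv' : ‖v‖⁻¹ ≠ 0 := inv_ne_zero (norm_ne_zero_iff.mpr hv)
  refine ⟨‖v‖⁻¹ • v, mem_sphere_zero_iff_norm.mpr (norm_smul_inv_norm hv), ?_, ?_⟩
  · exact (sq_mul_norm_sq_add_pow_four_pos (by simpa [v] using hv')).ne'
  · rw [magnetostrophicSymbol_smul hv', magnetostrophicSymbol_toE_zero_middle _ one_ne_zero,
      norm_toE_three]
    calc C < |C + 1| := (lt_add_one C).trans_le (le_abs_self _)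
      _ = √(0 ^ 2 + (-((C + 1) / 1)) ^ 2 + 0 ^ 2) := by
        rw [div_one, neg_sq, zero_pow two_ne_zero, zero_add, add_zero, Real.sqrt_sq_eq_abs]

/-- The symbol `M` of the magnetostrophic turbulence multiplier
(defined where `ξ₃²|ξ|² + ξ₂⁴ ≠ 0`) is even and `0`-homogeneous, satisfies `M(ξ)·ξ = 0`
wherever it is defined, and is unbounded on the unit sphere `S²`; for instance, for
`ξ = (ξ₁, 0, ξ₃) ∈ S²` with `ξ₃ ≠ 0` one has `M(ξ) = (0, -ξ₁/ξ₃, 0)`. -/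
theorem magnetostrophic_symbol (M : E 3 → E 3)
    (hM : ∀ ξ : E 3, M ξ = toE
      ![(ξ 1 * ξ 2 * ‖ξ‖ ^ 2 + ξ 0 * ξ 1 ^ 2 * ξ 2) / (ξ 2 ^ 2 * ‖ξ‖ ^ 2 + ξ 1 ^ 4),
        (-(ξ 0 * ξ 2 * ‖ξ‖ ^ 2) + ξ 1 ^ 3 * ξ 2) / (ξ 2 ^ 2 * ‖ξ‖ ^ 2 + ξ 1 ^ 4),
        -(ξ 1 ^ 2 * (ξ 0 ^ 2 + ξ 1 ^ 2)) / (ξ 2 ^ 2 * ‖ξ‖ ^ 2 + ξ 1 ^ 4)]) :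
    -- (1) even and 0-homogeneous
    (∀ ξ : E 3, ξ ≠ 0 → M (-ξ) = M ξ) ∧
    (∀ (r : ℝ), 0 < r → ∀ ξ : E 3, ξ ≠ 0 → M (r • ξ) = M ξ) ∧
    -- (2) M(ξ)·ξ = 0 wherever M is defined
    (∀ ξ : E 3, ξ 2 ^ 2 * ‖ξ‖ ^ 2 + ξ 1 ^ 4 ≠ 0 → inner ℝ (M ξ) ξ = (0:ℝ)) ∧
    -- (3) M is unbounded on S²
    (∀ C : ℝ, ∃ ξ ∈ Metric.sphere (0:E 3) 1,
      ξ 2 ^ 2 * ‖ξ‖ ^ 2 + ξ 1 ^ 4 ≠ 0 ∧ C < ‖M ξ‖) ∧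
    -- the explicit values on the ξ₂ = 0 section of the sphere
    (∀ a c : ℝ, a ^ 2 + c ^ 2 = 1 → c ≠ 0 →
      M (toE ![a, 0, c]) = toE ![0, -(a / c), 0]) := by
  obtain rfl : M = magnetostrophicSymbol := funext hM
  exact ⟨fun ξ _ ↦ magnetostrophicSymbol_neg ξ,
    fun _ hr ξ _ ↦ magnetostrophicSymbol_smul hr.ne' ξ,
    fun ξ _ ↦ inner_magnetostrophicSymbol_self ξ,
    exists_mem_sphere_lt_norm_magnetostrophicSymbol,
    fun a _ _ hc ↦ magnetostrophicSymbol_toE_zero_middle a hc⟩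
end
end

section
/- Let n ≥ 1 and let A = (θ, q, u) ∈ ℝ×ℝⁿ×ℝⁿ with |θ| < 1. Set x = (u+q)/(1+θ) and y = (u−q)/(1−θ). Then A = ((1+θ)/2)·X + ((1−θ)/2)·Y where X = (1, x, x) and Y = (−1, −y, y), both coefficients (1±θ)/2 lie in (0,1) and sum to 1, and both X and Y belong to the constraint set K = {(θ', θ'u', u') : θ' ∈ ℝ, u' ∈ ℝⁿ}. -/
/-!
With `λ = (1 + θ)/2` we have `1 - λ = (1 - θ)/2`, and `λ x = (u + q)/2`, `(1 - λ) y = (u - q)/2`.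
Adding these recovers `u`, subtracting them recovers `q`, and `λ - (1 - λ) = θ`.
The points `X = (1, 1 • x, x)` and `Y = (-1, (-1) • y, y)` lie on the sheets `θ = ±1` of `K`.
-/

noncomputable section

section TwoPoint

variable {𝕜 M : Type*} [Field 𝕜] [AddCommGroup M] [Module 𝕜 M]

theorem div_two_smul_inv_smul {a : 𝕜} (ha : a ≠ 0) (v : M) :
    (a / 2) • a⁻¹ • v = (2 : 𝕜)⁻¹ • v := by
  rw [smul_smul, div_mul_eq_mul_div, mul_inv_cancel₀ ha, one_div]

theorem mk_eq_two_point_combination [NeZero (2 : 𝕜)] (θ : 𝕜) (q u : M)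
    (hp : 1 + θ ≠ 0) (hm : 1 - θ ≠ 0) :
    ((θ, q, u) : 𝕜 × M × M)
      = ((1 + θ) / 2) • ((1 : 𝕜), (1 + θ)⁻¹ • (u + q), (1 + θ)⁻¹ • (u + q))
        + ((1 - θ) / 2) • ((-1 : 𝕜), -((1 - θ)⁻¹ • (u - q)), (1 - θ)⁻¹ • (u - q)) := by
  simp only [Prod.smul_mk, smul_neg, div_two_smul_inv_smul hp, div_two_smul_inv_smul hm,
    Prod.mk_add_mk]
  have two_ne : (2 : 𝕜) ≠ 0 := two_ne_zero
  refine Prod.ext ?_ (Prod.ext ?_ ?_)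
  · rw [smul_eq_mul, smul_eq_mul, mul_one, mul_one, ← sub_eq_add_neg, ← sub_div,
      eq_div_iff two_ne]
    ring
  all_goals match_scalars <;> field_simp <;> ring

theorem one_add_div_two_mem_Ioo [LinearOrder 𝕜] [IsStrictOrderedRing 𝕜] {θ : 𝕜} (hθ : |θ| < 1) :
    (1 + θ) / 2 ∈ Set.Ioo (0 : 𝕜) 1 := by
  obtain ⟨h₁, h₂⟩ := abs_lt.mp hθ
  constructor <;> linarith

theorem one_sub_div_two_mem_Ioo [LinearOrder 𝕜] [IsStrictOrderedRing 𝕜] {θ : 𝕜} (hθ : |θ| < 1) :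
    (1 - θ) / 2 ∈ Set.Ioo (0 : 𝕜) 1 := by
  simpa [sub_eq_add_neg] using one_add_div_two_mem_Ioo (θ := -θ) (by rwa [abs_neg])

end TwoPoint

theorem mk_smul_mem_Kset {n : ℕ} (t : ℝ) (v : E n) : (t, t • v, v) ∈ Kset n := rfl

theorem two_point_decomposition_general (n : ℕ)
    (θ : ℝ) (q u : E n) (hθ : |θ| < 1)
    (x y : E n) (hx : x = (1 + θ)⁻¹ • (u + q)) (hy : y = (1 - θ)⁻¹ • (u - q)) :
    ((θ, q, u) : ℝ × E n × E n)
        = ((1 + θ)/2) • (((1:ℝ), x, x) : ℝ × E n × E n)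
          + ((1 - θ)/2) • (((-1:ℝ), -y, y) : ℝ × E n × E n) ∧
    (1 + θ)/2 ∈ Set.Ioo (0:ℝ) 1 ∧ (1 - θ)/2 ∈ Set.Ioo (0:ℝ) 1 ∧
    (1 + θ)/2 + (1 - θ)/2 = 1 ∧
    (((1:ℝ), x, x) : ℝ × E n × E n) ∈ Kset n ∧
    (((-1:ℝ), -y, y) : ℝ × E n × E n) ∈ Kset n := by
  obtain ⟨hm, hp⟩ := abs_lt.mp hθ
  subst hx hy
  refine ⟨mk_eq_two_point_combination θ q u (by linarith) (by linarith),
    one_add_div_two_mem_Ioo hθ, one_sub_div_two_mem_Ioo hθ, by ring, ?_, ?_⟩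
  · simpa using mk_smul_mem_Kset 1 ((1 + θ)⁻¹ • (u + q))
  · simpa using mk_smul_mem_Kset (-1) ((1 - θ)⁻¹ • (u - q))

/-- Every state `A = (θ, q, u)` with `|θ| < 1` is the convex
combination `A = ((1+θ)/2)X + ((1-θ)/2)Y` of the two points `X = (1, x, x)` and
`Y = (-1, -y, y)` of `K`, where `x = (u+q)/(1+θ)` and `y = (u-q)/(1-θ)`. -/
theorem two_point_decomposition (n : ℕ) (hn : 1 ≤ n)
    (θ : ℝ) (q u : E n) (hθ : |θ| < 1)
    (x y : E n) (hx : x = (1 + θ)⁻¹ • (u + q)) (hy : y = (1 - θ)⁻¹ • (u - q)) :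
    ((θ, q, u) : ℝ × E n × E n)
        = ((1 + θ)/2) • (((1:ℝ), x, x) : ℝ × E n × E n)
          + ((1 - θ)/2) • (((-1:ℝ), -y, y) : ℝ × E n × E n) ∧
    (1 + θ)/2 ∈ Set.Ioo (0:ℝ) 1 ∧ (1 - θ)/2 ∈ Set.Ioo (0:ℝ) 1 ∧
    (1 + θ)/2 + (1 - θ)/2 = 1 ∧
    (((1:ℝ), x, x) : ℝ × E n × E n) ∈ Kset n ∧
    (((-1:ℝ), -y, y) : ℝ × E n × E n) ∈ Kset n :=
  two_point_decomposition_general n θ q u hθ x y hx hy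
end
end
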